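/- arXiv:2110.08040 — 2 statements merged into one kernel-verified Lean document; each statement's English description precedes it below -/
import Mathlib

section
/- Suppose A is finite, C is congruence orderable with respect to 1 (i.e., Θ(1,a) = Θ(1,b) implies a = b for a, b ∈ A), and C is congruence permutable (for all α, β ∈ C, the join α ⊔ β equals the relational composition of α and β; equivalently the compositions α∘β and β∘α coincide). Then condition (O) holds: for every α ∈ C and a, b ∈ A, α ⊔ Θ(1,a) = α ⊔ Θ(1,b) if and only if (a,b) ∈ α. (This is Proposition 19 of the paper: a finite, congruence orderable, congruence permutable algebra has all its quotients congruence orderable.) -/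
variable {A : Type*}

/-- `η` is a completely meet irreducible member of `C`, with (unique) cover `p` in `C`. -/
def IsCMI (C : Set (Setoid A)) (η p : Setoid A) : Prop :=
  η ∈ C ∧ p ∈ C ∧ η < p ∧ ∀ β ∈ C, η < β → p ≤ β

/-- A single up or down transposition between the intervals `I[pq.1, pq.2]`
and `I[rs.1, rs.2]` of `C`. -/
def Persp (C : Set (Setoid A)) (pq rs : Setoid A × Setoid A) : Prop :=
  pq.1 ∈ C ∧ pq.2 ∈ C ∧ rs.1 ∈ C ∧ rs.2 ∈ C ∧
    ((pq.1 = pq.2 ⊓ rs.1 ∧ rs.2 = pq.2 ⊔ rs.1) ∨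
      (rs.1 = rs.2 ⊓ pq.1 ∧ pq.2 = rs.2 ⊔ pq.1))

/-- Projectivity of intervals of `C`: a finite chain of up and down transpositions. -/
def Projective (C : Set (Setoid A)) : Setoid A × Setoid A → Setoid A × Setoid A → Prop :=
  Relation.ReflTransGen (Persp C)

/-- Prime interval projectivity `φ ∼ ψ`: the prime intervals `I[φ,φ⁺]` and `I[ψ,ψ⁺]`
over completely meet irreducible members of `C` are projective. -/
def PIP (C : Set (Setoid A)) (φ ψ : Setoid A) : Prop :=
  ∃ p q, IsCMI C φ p ∧ IsCMI C ψ q ∧ Projective C (φ, p) (ψ, q)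

/-- `Θ(a,b)`: the least member of `C` containing the pair `(a, b)`. -/
def theta (C : Set (Setoid A)) (a b : A) : Setoid A :=
  sInf {s | s ∈ C ∧ s.r a b}

/-- The relation `φ • ψ`: the pairs of `p = φ⁺ = ψ⁺` on which `φ` and `ψ` agree
(the complement of the symmetric difference of `φ` and `ψ` intersected with `p`). -/
def Bul (p φ ψ : Setoid A) (x y : A) : Prop :=
  p.r x y ∧ (φ.r x y ↔ ψ.r x y)

/-!
Fix `α` and a class `T = {x | α ⊔ Θ(1,x) = α ⊔ Θ(1,a)}`; as `A` is finite, some `y ∈ T` has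
`Θ(1,y)` minimal. For `x ∈ T`, `(1,x) ∈ Θ(1,y) ⊔ α = Θ(1,y) ∘ α` by permutability, so there is `v`
with `(1,v) ∈ Θ(1,y)` and `(v,x) ∈ α`. Then `v ∈ T` and `Θ(1,v) ≤ Θ(1,y)`, so minimality and
orderability give `v = y`: every element of `T` is `α`-related to `y`.
-/

section

variable {C : Set (Setoid A)}

theorem theta_mem (hInf : ∀ S ⊆ C, sInf S ∈ C) (a b : A) : theta C a b ∈ C :=
  hInf _ fun _ hs => hs.1

theorem theta_rel (C : Set (Setoid A)) (a b : A) : (theta C a b).r a b :=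
  fun _ hs => hs.2

theorem theta_le {s : Setoid A} {a b : A} (hs : s ∈ C) (h : s.r a b) : theta C a b ≤ s :=
  sInf_le ⟨hs, h⟩

theorem sup_mem (hSup : ∀ S ⊆ C, sSup S ∈ C) {β γ : Setoid A} (hβ : β ∈ C) (hγ : γ ∈ C) :
    β ⊔ γ ∈ C := by
  simpa only [sSup_pair] using hSup {β, γ} (by rintro s (rfl | rfl) <;> assumption)

theorem sup_theta_le_of_rel (hInf : ∀ S ⊆ C, sInf S ∈ C) (hSup : ∀ S ⊆ C, sSup S ∈ C)
    {α : Setoid A} (hα : α ∈ C) (c : A) {u v : A} (huv : α.r u v) :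
    α ⊔ theta C c v ≤ α ⊔ theta C c u := by
  refine sup_le le_sup_left (theta_le (sup_mem hSup hα (theta_mem hInf c u)) ?_)
  exact (α ⊔ theta C c u).trans (le_sup_right (a := α) (theta_rel C c u))
    (le_sup_left (b := theta C c u) huv)

theorem sup_theta_eq_of_rel (hInf : ∀ S ⊆ C, sInf S ∈ C) (hSup : ∀ S ⊆ C, sSup S ∈ C)
    {α : Setoid A} (hα : α ∈ C) (c : A) {u v : A} (huv : α.r u v) :
    α ⊔ theta C c u = α ⊔ theta C c v :=
  le_antisymm (sup_theta_le_of_rel hInf hSup hα c (α.symm huv))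
    (sup_theta_le_of_rel hInf hSup hα c huv)

theorem exists_rel_theta_le_of_sup_eq (hInf : ∀ S ⊆ C, sInf S ∈ C)
    (hSup : ∀ S ⊆ C, sSup S ∈ C)
    (hperm : ∀ α ∈ C, ∀ β ∈ C, ∀ x y : A, (α ⊔ β).r x y ↔ ∃ z, α.r x z ∧ β.r z y)
    {α : Setoid A} (hα : α ∈ C) (c : A) {x y : A}
    (h : α ⊔ theta C c x = α ⊔ theta C c y) :
    ∃ v, α.r v x ∧ theta C c v ≤ theta C c y ∧ α ⊔ theta C c v = α ⊔ theta C c y := by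
  have hcx : (theta C c y ⊔ α).r c x := by
    rw [sup_comm, ← h]
    exact le_sup_right (a := α) (theta_rel C c x)
  obtain ⟨v, hcv, hvx⟩ := (hperm _ (theta_mem hInf c y) _ hα c x).mp hcx
  have hvy : theta C c v ≤ theta C c y := theta_le (theta_mem hInf c y) hcv
  refine ⟨v, hvx, hvy, le_antisymm (sup_le_sup_left hvy α) ?_⟩
  rw [← h]
  exact sup_theta_le_of_rel hInf hSup hα c hvx

end

theorem stmt6_general [Finite A] (one : A) (C : Set (Setoid A))
    (hInf : ∀ S ⊆ C, sInf S ∈ C) (hSup : ∀ S ⊆ C, sSup S ∈ C)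
    (horder : ∀ a b : A, theta C one a = theta C one b → a = b)
    (hperm : ∀ α ∈ C, ∀ β ∈ C, ∀ x y : A,
      (α ⊔ β).r x y ↔ ∃ z, α.r x z ∧ β.r z y) :
    ∀ α ∈ C, ∀ a b : A, α ⊔ theta C one a = α ⊔ theta C one b ↔ α.r a b := by
  intro α hα a b
  refine ⟨fun hab => ?_, sup_theta_eq_of_rel hInf hSup hα one⟩
  set T : Set A := {x | α ⊔ theta C one x = α ⊔ theta C one a}
  obtain ⟨y, hyT, hymin⟩ :=
    Set.Finite.exists_minimalFor (theta C one) T (Set.toFinite T) ⟨a, rfl⟩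
  have hyrel : ∀ x ∈ T, α.r y x := by
    intro x hxT
    obtain ⟨v, hvx, hvy, hvT⟩ :=
      exists_rel_theta_le_of_sup_eq hInf hSup hperm hα one (hxT.trans hyT.symm)
    have hv : v ∈ T := hvT.trans hyT
    rwa [horder y v (le_antisymm (hymin hv hvy) hvy)]
  exact α.trans (α.symm (hyrel a rfl)) (hyrel b hab.symm)

/-- Proposition 19: a finite, congruence orderable, congruence permutable algebra
has all its quotients congruence orderable, i.e. condition (O) holds. -/
theorem stmt6 [Finite A] (one : A) (C : Set (Setoid A))
    (hInf : ∀ S ⊆ C, sInf S ∈ C) (hSup : ∀ S ⊆ C, sSup S ∈ C)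
    (hDir : ∀ D ⊆ C, D.Nonempty → DirectedOn (· ≤ ·) D →
      ∀ x y : A, (sSup D).r x y ↔ ∃ s ∈ D, s.r x y)
    (horder : ∀ a b : A, theta C one a = theta C one b → a = b)
    (hperm : ∀ α ∈ C, ∀ β ∈ C, ∀ x y : A,
      (α ⊔ β).r x y ↔ ∃ z, α.r x z ∧ β.r z y) :
    ∀ α ∈ C, ∀ a b : A, α ⊔ theta C one a = α ⊔ theta C one b ↔ α.r a b :=
  stmt6_general one C hInf hSup horder hperm
end

section
/- Assume conditions (M), (O), (R), (P) and (D). Let S be a finite member of 𝒮 and let μ ∈ Cm be such that ⋀S ≤ μ. Then μ ∈ S. (This is Lemma 17 of the paper.) -/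
variable {A : Type*}

/-- `S ∈ 𝒮`: `S` is an upward closed subset of `Cm` such that for every PIP class `U`
(of an element `η` with cover `p`), the set `(S ∩ U) ∪ {p}` is closed under the Boolean
group operation `•` of `(Ū, •)`. -/
def InCalS (C : Set (Setoid A)) (S : Set (Setoid A)) : Prop :=
  (∀ μ ∈ S, ∃ p, IsCMI C μ p) ∧
  (∀ μ ∈ S, ∀ ν p, IsCMI C ν p → μ ≤ ν → ν ∈ S) ∧
  ∀ η p, IsCMI C η p → ∀ φ ψ : Setoid A,
    ((φ ∈ S ∧ PIP C φ η) ∨ φ = p) → ((ψ ∈ S ∧ PIP C ψ η) ∨ ψ = p) →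
      ∃ σ : Setoid A, ((σ ∈ S ∧ PIP C σ η) ∨ σ = p) ∧ σ.r = Bul p φ ψ

variable {C : Set (Setoid A)}

theorem inf_mem_of_sInf_mem (hInf : ∀ S ⊆ C, sInf S ∈ C) {α β : Setoid A}
    (hα : α ∈ C) (hβ : β ∈ C) : α ⊓ β ∈ C := by
  simpa only [sInf_pair] using hInf {α, β} (Set.insert_subset hα (Set.singleton_subset_iff.2 hβ))

theorem sup_mem_of_sSup_mem (hSup : ∀ S ⊆ C, sSup S ∈ C) {α β : Setoid A}
    (hα : α ∈ C) (hβ : β ∈ C) : α ⊔ β ∈ C := by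
  simpa only [sSup_pair] using hSup {α, β} (Set.insert_subset hα (Set.singleton_subset_iff.2 hβ))

namespace IsCMI

theorem cover_unique {η p q : Setoid A} (hp : IsCMI C η p) (hq : IsCMI C η q) : p = q :=
  le_antisymm (hp.2.2.2 q hq.2.1 hq.2.2.1) (hq.2.2.2 p hp.2.1 hp.2.2.1)

theorem eq_of_le {μ σ p : Setoid A} (hμ : IsCMI C μ p) (hσ : IsCMI C σ p) (hle : μ ≤ σ) :
    μ = σ :=
  hle.eq_or_lt.resolve_right fun hlt => (hμ.2.2.2 σ hσ.1 hlt).not_gt hσ.2.2.1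

/-- If `γ := μ ⊓ μ₁` were not below `μ₂`, then `γ ⊔ μ₂ = p` and modularity would give
`γ = γ ⊔ (μ₂ ⊓ μ₁) = p ⊓ μ₁ = μ₁`, i.e. `μ₁ ≤ μ`. -/
theorem inf_le_of_inf_le (hInf : ∀ S ⊆ C, sInf S ∈ C) (hSup : ∀ S ⊆ C, sSup S ∈ C)
    (hM : ∀ x ∈ C, ∀ y ∈ C, ∀ z ∈ C, x ≤ z → x ⊔ y ⊓ z = (x ⊔ y) ⊓ z)
    {μ μ₁ μ₂ p : Setoid A} (hμ : μ ∈ C) (h₁ : IsCMI C μ₁ p) (h₂ : IsCMI C μ₂ p)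
    (hmeet : μ₁ ⊓ μ₂ ≤ μ) (hnot : ¬ μ₁ ≤ μ) : μ ⊓ μ₁ ≤ μ₂ := by
  set γ := μ ⊓ μ₁
  have hγ : γ ∈ C := inf_mem_of_sInf_mem hInf hμ h₁.1
  by_contra hγ₂
  have hjoin : γ ⊔ μ₂ = p :=
    le_antisymm (sup_le (inf_le_right.trans h₁.2.2.1.le) h₂.2.2.1.le)
      (h₂.2.2.2 _ (sup_mem_of_sSup_mem hSup hγ h₂.1) (right_lt_sup.2 hγ₂))
  have hγ₁ : γ = μ₁ := by
    have hmod := hM γ hγ μ₂ h₂.1 μ₁ h₁.1 inf_le_right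
    rwa [hjoin, inf_eq_right.2 h₁.2.2.1.le, sup_eq_left.2
      (le_inf (inf_comm μ₂ μ₁ ▸ hmeet) inf_le_right)] at hmod
  exact hnot (hγ₁ ▸ inf_le_left)

end IsCMI

theorem PIP.isCMI (hP : ∀ φ ψ p q : Setoid A, IsCMI C φ p → IsCMI C ψ q →
      Projective C (φ, p) (ψ, q) → p = q)
    {ν μ p : Setoid A} (h : PIP C ν μ) (hμ : IsCMI C μ p) : IsCMI C ν p := by
  obtain ⟨q, p', hν, hμ', hproj⟩ := h
  rwa [hP ν μ q p' hν hμ' hproj, hμ'.cover_unique hμ] at hν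

theorem le_of_bul {μ μ₁ μ₂ p σ : Setoid A} (hμp : μ ≤ p) (h₁ : μ ⊓ μ₁ ≤ μ₂)
    (h₂ : μ ⊓ μ₂ ≤ μ₁) (hσ : σ.r = Bul p μ₁ μ₂) : μ ≤ σ := by
  intro x y hxy
  show σ.r x y
  rw [hσ]
  exact ⟨hμp hxy, fun h => h₁ ⟨hxy, h⟩, fun h => h₂ ⟨hxy, h⟩⟩

theorem eq_of_bul_eq {μ₁ μ₂ p : Setoid A} (h₁ : μ₁ ≤ p) (h₂ : μ₂ ≤ p)
    (hp : p.r = Bul p μ₁ μ₂) : μ₁ = μ₂ := by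
  ext x y
  have hbul : ∀ {x y}, p.r x y → (μ₁.r x y ↔ μ₂.r x y) := fun hxy => (hp ▸ hxy : Bul p μ₁ μ₂ _ _).2
  exact ⟨fun h => (hbul (h₁ h)).1 h, fun h => (hbul (h₂ h)).2 h⟩

namespace InCalS

variable {S : Set (Setoid A)}

theorem mem_of_le (hS : InCalS C S) {ν μ p : Setoid A} (hν : ν ∈ S) (hμ : IsCMI C μ p)
    (hle : ν ≤ μ) : μ ∈ S :=
  hS.2.1 ν hν μ p hμ hle

theorem subset (hS : InCalS C S) : S ⊆ C := fun _ hx => (hS.1 _ hx).choose_spec.1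

/-- If neither `μᵢ` lies below `μ`, then `μ` lies below `μ₁ • μ₂`, which `S` contains; the
product cannot be the cover `p`, as that would force `μ₁ = μ₂`. -/
theorem mem_of_inf_le (hInf : ∀ S ⊆ C, sInf S ∈ C) (hSup : ∀ S ⊆ C, sSup S ∈ C)
    (hM : ∀ x ∈ C, ∀ y ∈ C, ∀ z ∈ C, x ≤ z → x ⊔ y ⊓ z = (x ⊔ y) ⊓ z)
    (hP : ∀ φ ψ p q : Setoid A, IsCMI C φ p → IsCMI C ψ q →
      Projective C (φ, p) (ψ, q) → p = q)
    (hS : InCalS C S) {μ μ₁ μ₂ p : Setoid A} (hμ : IsCMI C μ p)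
    (hS₁ : μ₁ ∈ S) (hPIP₁ : PIP C μ₁ μ) (hS₂ : μ₂ ∈ S) (hPIP₂ : PIP C μ₂ μ)
    (hmeet : μ₁ ⊓ μ₂ ≤ μ) : μ ∈ S := by
  by_cases hc₁ : μ₁ ≤ μ
  · exact hS.mem_of_le hS₁ hμ hc₁
  by_cases hc₂ : μ₂ ≤ μ
  · exact hS.mem_of_le hS₂ hμ hc₂
  have h₁ := hPIP₁.isCMI hP hμ
  have h₂ := hPIP₂.isCMI hP hμ
  obtain ⟨σ, hσ, hσr⟩ := hS.2.2 μ p hμ μ₁ μ₂ (.inl ⟨hS₁, hPIP₁⟩) (.inl ⟨hS₂, hPIP₂⟩)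
  have hμσ : μ ≤ σ := le_of_bul hμ.2.2.1.le
    (IsCMI.inf_le_of_inf_le hInf hSup hM hμ.1 h₁ h₂ hmeet hc₁)
    (IsCMI.inf_le_of_inf_le hInf hSup hM hμ.1 h₂ h₁ (inf_comm μ₁ μ₂ ▸ hmeet) hc₂) hσr
  rcases hσ with ⟨hσS, hσPIP⟩ | rfl
  · rwa [hμ.eq_of_le (hσPIP.isCMI hP hμ) hμσ]
  · have h₁₂ := eq_of_bul_eq h₁.2.2.1.le h₂.2.2.1.le hσr
    exact absurd ((le_inf le_rfl h₁₂.le).trans hmeet) hc₁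

/-- Induction on `T`: condition (D) splits `a ⊓ ⋀T ≤ μ` into `μ₁ ⊓ μ₂ ≤ μ` with `a ≤ μ₁`,
`⋀T ≤ μ₂` and each `μᵢ` either `⊤` or in the PIP class of `μ`. -/
theorem mem_of_sInf_le (hInf : ∀ S ⊆ C, sInf S ∈ C) (hSup : ∀ S ⊆ C, sSup S ∈ C)
    (hM : ∀ x ∈ C, ∀ y ∈ C, ∀ z ∈ C, x ≤ z → x ⊔ y ⊓ z = (x ⊔ y) ⊓ z)
    (hP : ∀ φ ψ p q : Setoid A, IsCMI C φ p → IsCMI C ψ q →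
      Projective C (φ, p) (ψ, q) → p = q)
    (hD : ∀ α ∈ C, ∀ β ∈ C, ∀ η p, IsCMI C η p → α ⊓ β ≤ η →
      ∃ μ₁ μ₂ : Setoid A, (μ₁ = ⊤ ∨ PIP C μ₁ η) ∧ (μ₂ = ⊤ ∨ PIP C μ₂ η) ∧
        α ≤ μ₁ ∧ β ≤ μ₂ ∧ μ₁ ⊓ μ₂ ≤ η)
    (hS : InCalS C S) {T : Set (Setoid A)} (hT : T.Finite) (hTS : T ⊆ S)
    {μ p : Setoid A} (hμ : IsCMI C μ p) (hle : sInf T ≤ μ) : μ ∈ S := by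
  induction T, hT using Set.Finite.induction_on generalizing μ p with
  | empty =>
    rw [sInf_empty, top_le_iff] at hle
    exact absurd (hle ▸ hμ.2.2.1) not_top_lt
  | @insert a T _ _ ih =>
    rw [Set.insert_subset_iff] at hTS
    rw [sInf_insert] at hle
    obtain ⟨μ₁, μ₂, hμ₁, hμ₂, ha₁, hT₂, hmeet⟩ :=
      hD a (hS.subset hTS.1) (sInf T) (hInf T (hTS.2.trans hS.subset)) μ p hμ hle
    rcases hμ₂ with rfl | hPIP₂
    · exact hS.mem_of_le hTS.1 hμ (ha₁.trans (by simpa using hmeet))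
    rcases hμ₁ with rfl | hPIP₁
    · exact ih hTS.2 hμ (hT₂.trans (by simpa using hmeet))
    exact hS.mem_of_inf_le hInf hSup hM hP hμ
      (hS.mem_of_le hTS.1 (hPIP₁.isCMI hP hμ) ha₁) hPIP₁
      (ih hTS.2 (hPIP₂.isCMI hP hμ) hT₂) hPIP₂ hmeet

end InCalS

theorem stmt13_general (C : Set (Setoid A))
    (hInf : ∀ S ⊆ C, sInf S ∈ C) (hSup : ∀ S ⊆ C, sSup S ∈ C)
    (hM : ∀ x ∈ C, ∀ y ∈ C, ∀ z ∈ C, x ≤ z → x ⊔ y ⊓ z = (x ⊔ y) ⊓ z)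
    (hP : ∀ φ ψ p q : Setoid A, IsCMI C φ p → IsCMI C ψ q →
      Projective C (φ, p) (ψ, q) → p = q)
    (hD : ∀ α ∈ C, ∀ β ∈ C, ∀ η p, IsCMI C η p → α ⊓ β ≤ η →
      ∃ μ₁ μ₂ : Setoid A, (μ₁ = ⊤ ∨ PIP C μ₁ η) ∧ (μ₂ = ⊤ ∨ PIP C μ₂ η) ∧
        α ≤ μ₁ ∧ β ≤ μ₂ ∧ μ₁ ⊓ μ₂ ≤ η)
    (S : Set (Setoid A)) (hfin : S.Finite) (hS : InCalS C S)
    (μ p : Setoid A) (hμ : IsCMI C μ p) (hle : sInf S ≤ μ) :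
    μ ∈ S :=
  hS.mem_of_sInf_le hInf hSup hM hP hD hfin subset_rfl hμ hle

/-- Lemma 17: if `S ∈ 𝒮` is finite and `μ ∈ Cm` satisfies `⋀S ≤ μ`, then `μ ∈ S`. -/
theorem stmt13 (one : A) (C : Set (Setoid A))
    (hInf : ∀ S ⊆ C, sInf S ∈ C) (hSup : ∀ S ⊆ C, sSup S ∈ C)
    (hDir : ∀ D ⊆ C, D.Nonempty → DirectedOn (· ≤ ·) D →
      ∀ x y : A, (sSup D).r x y ↔ ∃ s ∈ D, s.r x y)
    (hM : ∀ x ∈ C, ∀ y ∈ C, ∀ z ∈ C, x ≤ z → x ⊔ y ⊓ z = (x ⊔ y) ⊓ z)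
    (hO : ∀ α ∈ C, ∀ a b : A, α ⊔ theta C one a = α ⊔ theta C one b ↔ α.r a b)
    (hR : ∀ α ∈ C, ∀ β ∈ C, (∀ x : A, α.r one x ↔ β.r one x) → α = β)
    (hP : ∀ φ ψ p q : Setoid A, IsCMI C φ p → IsCMI C ψ q →
      Projective C (φ, p) (ψ, q) → p = q)
    (hD : ∀ α ∈ C, ∀ β ∈ C, ∀ η p, IsCMI C η p → α ⊓ β ≤ η →
      ∃ μ₁ μ₂ : Setoid A, (μ₁ = ⊤ ∨ PIP C μ₁ η) ∧ (μ₂ = ⊤ ∨ PIP C μ₂ η) ∧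
        α ≤ μ₁ ∧ β ≤ μ₂ ∧ μ₁ ⊓ μ₂ ≤ η)
    (S : Set (Setoid A)) (hfin : S.Finite) (hS : InCalS C S)
    (μ p : Setoid A) (hμ : IsCMI C μ p) (hle : sInf S ≤ μ) :
    μ ∈ S :=
  stmt13_general C hInf hSup hM hP hD S hfin hS μ p hμ hle
end
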